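/- Let (v_t) be a bounded continuous stationary process with autocorrelation function R(t) = E[v_0 v_t] integrable on [0,∞). Then the limit S(ω) = lim_{T→∞} (1/T) E[|∫₀ᵀ v_t e^{−iωt} dt|²] exists and equals 2 ∫₀^∞ R(t) cos(ωt) dt, provided R is continuous and E[v_s v_t] = R(|t−s|). -/

import Mathlib

/-!
Write `F(t) = v_t e^{-iwt}`. Expanding `‖∫₀ᵀ F‖² = ∫∫ conj F(s) F(t)` and exchanging the
expectation with the double integral (everything is bounded), stationarity gives
`E ‖∫₀ᵀ F‖² = ∫₀ᵀ ∫₀ᵀ g(t - s) dt ds` with the even integrable function `g(u) = R(|u|) cos(wu)`.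
After the substitution `s = T x` the normalised quantity becomes `∫₀¹ ∫_{-Tx}^{T(1-x)} g`, which
tends to `∫_ℝ g = 2 ∫₀^∞ R(t) cos(wt) dt` by dominated convergence.
-/

open MeasureTheory Set Filter Complex
open scoped ComplexConjugate Topology

lemma sq_norm_integral_eq_integral_prod_re_conj_mul {α : Type*} [MeasurableSpace α]
    {ν : Measure α} [SFinite ν] {F : α → ℂ} (hF : Integrable F ν) :
    ‖∫ x, F x ∂ν‖ ^ 2 = ∫ p, (conj (F p.1) * F p.2).re ∂(ν.prod ν) := by
  have hconj : Integrable (fun x => conj (F x)) ν :=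
    conjCLE.toContinuousLinearMap.integrable_comp hF
  calc ‖∫ x, F x ∂ν‖ ^ 2 = (conj (∫ x, F x ∂ν) * ∫ x, F x ∂ν).re := by
        rw [← normSq_eq_conj_mul_self, ofReal_re, normSq_eq_norm_sq]
    _ = (∫ p, conj (F p.1) * F p.2 ∂(ν.prod ν)).re := by
        rw [integral_prod_mul (fun x => conj (F x)) F, integral_conj]
    _ = _ := (integral_re (hconj.mul_prod hF)).symm

lemma re_conj_ofReal_mul_exp_mul (a b w s t : ℝ) :
    (conj ((a : ℂ) * exp (-(I * w * s))) * ((b : ℂ) * exp (-(I * w * t)))).re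
      = a * b * Real.cos (w * (t - s)) := by
  have : conj ((a : ℂ) * exp (-(I * w * s))) * ((b : ℂ) * exp (-(I * w * t)))
      = ((a * b : ℝ) : ℂ) * exp ((-(w * (t - s)) : ℝ) * I) := by
    rw [map_mul, conj_ofReal, ← exp_conj, mul_mul_mul_comm, ← exp_add]
    push_cast
    simp only [map_neg, map_mul, conj_I, conj_ofReal]
    ring_nf
  rw [this, re_ofReal_mul, exp_ofReal_mul_I_re, Real.cos_neg]

lemma Real.cos_mul_abs (w u : ℝ) : Real.cos (w * |u|) = Real.cos (w * u) := by
  rcases abs_cases u with ⟨h, _⟩ | ⟨h, _⟩ <;> simp [h]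

lemma integrable_comp_abs {E : Type*} [NormedAddCommGroup E] {f : ℝ → E}
    (hf : IntegrableOn f (Ioi 0)) : Integrable fun x => f |x| := by
  have hIoi : IntegrableOn (fun x => f |x|) (Ioi 0) :=
    hf.congr_fun (fun x hx => by rw [abs_of_pos (mem_Ioi.mp hx)]) measurableSet_Ioi
  have hIic : IntegrableOn (fun x => f |x|) (Iic 0) := by
    have hneg : MeasurableEmbedding fun x : ℝ => -x := (Homeomorph.neg ℝ).measurableEmbedding
    rw [← Measure.map_neg_eq_self (volume : Measure ℝ), hneg.integrableOn_map_iff]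
    simp_rw [Function.comp_def, abs_neg, neg_preimage, neg_Iic, neg_zero]
    exact Iff.mpr integrableOn_Ici_iff_integrableOn_Ioi hIoi
  simpa [Iic_union_Ioi] using hIic.union hIoi

lemma tendsto_inv_mul_integral_integral_sub {g : ℝ → ℝ} (hg : Integrable g) :
    Tendsto (fun T => T⁻¹ * ∫ s in (0:ℝ)..T, ∫ t in (0:ℝ)..T, g (t - s)) atTop
      (𝓝 (∫ u, g u)) := by
  have hrescale : ∀ T : ℝ, 0 < T → T⁻¹ * ∫ s in (0:ℝ)..T, ∫ t in (0:ℝ)..T, g (t - s)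
      = ∫ x in (0:ℝ)..1, ∫ u in (-(T * x))..(T * (1 - x)), g u := by
    intro T hT
    have := intervalIntegral.integral_comp_mul_left
      (fun s => ∫ t in (0:ℝ)..T, g (t - s)) (a := 0) (b := 1) hT.ne'
    simp only [mul_zero, mul_one, smul_eq_mul] at this
    rw [← this]
    simp only [intervalIntegral.integral_comp_sub_right, zero_sub, mul_one_sub]
  have hprim : Continuous fun y : ℝ => ∫ u in (0:ℝ)..y, g u :=
    intervalIntegral.continuous_primitive (fun _ _ => hg.intervalIntegrable) 0
  have hdiff : ∀ a b : ℝ, ∫ u in a..b, g u = (∫ u in (0:ℝ)..b, g u) - ∫ u in (0:ℝ)..a, g u :=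
    fun a b => (intervalIntegral.integral_interval_sub_left
      hg.intervalIntegrable hg.intervalIntegrable).symm
  have hlim := intervalIntegral.tendsto_integral_filter_of_dominated_convergence
    (μ := volume) (a := 0) (b := 1) (l := atTop)
    (F := fun T x => ∫ u in (-(T * x))..(T * (1 - x)), g u) (f := fun _ => ∫ u, g u)
    (fun _ => ∫ u, ‖g u‖)
    (Eventually.of_forall fun T => by
      rw [funext fun x => hdiff (-(T * x)) (T * (1 - x))]
      exact (Continuous.aestronglyMeasurable (by fun_prop)))
    (Eventually.of_forall fun T => Eventually.of_forall fun x _ =>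
      (intervalIntegral.norm_integral_le_integral_norm_uIoc).trans
        (setIntegral_le_integral hg.norm (Eventually.of_forall fun _ => norm_nonneg _)))
    intervalIntegrable_const
    (by
      -- at `x = 1` the upper endpoint `T * (1 - x)` stays at `0`
      filter_upwards [Measure.ae_ne volume 1] with x hx1 hx
      rw [uIoc_of_le zero_le_one] at hx
      exact intervalIntegral_tendsto_integral hg
        (tendsto_neg_atTop_atBot.comp (tendsto_id.atTop_mul_const hx.1))
        (tendsto_id.atTop_mul_const (sub_pos.mpr (lt_of_le_of_ne hx.2 hx1))))
  rw [intervalIntegral.integral_const, sub_zero, one_smul] at hlim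
  exact hlim.congr' (eventually_gt_atTop 0 |>.mono fun T hT => (hrescale T hT).symm)

section StationaryProcess

variable {Ω : Type*} [MeasurableSpace Ω] {μ : Measure Ω} [IsFiniteMeasure μ]
  {v : ℝ → Ω → ℝ} {M : ℝ}

lemma integrable_uncurry_mul_mul_cos (hv_meas : Measurable (Function.uncurry v))
    (hv_bdd : ∀ t ω, |v t ω| ≤ M) (w : ℝ) (ν : Measure ℝ) [IsFiniteMeasure ν] :
    Integrable (Function.uncurry fun ω (p : ℝ × ℝ) =>
      v p.1 ω * v p.2 ω * Real.cos (w * (p.2 - p.1))) (μ.prod (ν.prod ν)) := by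
  refine Integrable.of_bound (Measurable.aestronglyMeasurable ?_) (M * M)
    (Eventually.of_forall fun ⟨ω, s, t⟩ => ?_)
  · exact ((hv_meas.comp (measurable_snd.fst.prodMk measurable_fst)).mul
      (hv_meas.comp (measurable_snd.snd.prodMk measurable_fst))).mul (by fun_prop)
  · simp only [Function.uncurry_apply_pair, norm_mul, Real.norm_eq_abs]
    have hM : 0 ≤ M := (abs_nonneg _).trans (hv_bdd 0 ω)
    calc |v s ω| * |v t ω| * |Real.cos (w * (t - s))| ≤ M * M * 1 := by
          gcongr
          exacts [hv_bdd _ _, hv_bdd _ _, Real.abs_cos_le_one _]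
      _ = M * M := mul_one _

lemma integral_sq_norm_intervalIntegral_mul_exp_eq (hv_meas : Measurable (Function.uncurry v))
    (hv_bdd : ∀ t ω, |v t ω| ≤ M) (w : ℝ) {T : ℝ} (hT : 0 ≤ T) :
    ∫ ω, ‖∫ t in (0:ℝ)..T, (v t ω : ℂ) * exp (-(I * w * t))‖ ^ 2 ∂μ
      = ∫ p in Ioc 0 T ×ˢ Ioc 0 T,
          ∫ ω, v p.1 ω * v p.2 ω * Real.cos (w * (p.2 - p.1)) ∂μ := by
  set ν := volume.restrict (Ioc (0:ℝ) T)
  have hF : ∀ ω, Integrable (fun t => (v t ω : ℂ) * exp (-(I * w * t))) ν := fun ω =>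
    Integrable.of_bound ((hv_meas.comp measurable_prodMk_right).complex_ofReal.mul
        (by fun_prop : Continuous fun t : ℝ => exp (-(I * w * t))).measurable).aestronglyMeasurable
      M (Eventually.of_forall fun t => by simpa [norm_exp, neg_mul, mul_comm] using hv_bdd t ω)
  calc _ = ∫ ω, ∫ p, v p.1 ω * v p.2 ω * Real.cos (w * (p.2 - p.1)) ∂(ν.prod ν) ∂μ := by
        congr 1 with ω
        rw [intervalIntegral.integral_of_le hT, sq_norm_integral_eq_integral_prod_re_conj_mul (hF ω)]
        simp only [re_conj_ofReal_mul_exp_mul]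
    _ = _ := by
        rw [integral_integral_swap (integrable_uncurry_mul_mul_cos hv_meas hv_bdd w ν),
          Measure.volume_eq_prod, Measure.prod_restrict]

lemma integral_sq_norm_intervalIntegral_mul_exp_eq_of_stationary
    (hv_meas : Measurable (Function.uncurry v)) (hv_bdd : ∀ t ω, |v t ω| ≤ M) {C : ℝ → ℝ}
    (hstat : ∀ s t : ℝ, 0 ≤ s → 0 ≤ t → ∫ ω, v s ω * v t ω ∂μ = C (t - s))
    (w : ℝ) {T : ℝ} (hT : 0 ≤ T) :
    ∫ ω, ‖∫ t in (0:ℝ)..T, (v t ω : ℂ) * exp (-(I * w * t))‖ ^ 2 ∂μ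
      = ∫ s in (0:ℝ)..T, ∫ t in (0:ℝ)..T, C (t - s) * Real.cos (w * (t - s)) := by
  have hcov : EqOn (fun p : ℝ × ℝ => ∫ ω, v p.1 ω * v p.2 ω * Real.cos (w * (p.2 - p.1)) ∂μ)
      (fun p => C (p.2 - p.1) * Real.cos (w * (p.2 - p.1))) (Ioc 0 T ×ˢ Ioc 0 T) :=
    fun p hp => by simp only [integral_mul_const, hstat _ _ hp.1.1.le hp.2.1.le]
  have hint : IntegrableOn (fun p : ℝ × ℝ => C (p.2 - p.1) * Real.cos (w * (p.2 - p.1)))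
      (Ioc 0 T ×ˢ Ioc 0 T) := by
    refine IntegrableOn.congr_fun ?_ hcov (measurableSet_Ioc.prod measurableSet_Ioc)
    rw [IntegrableOn, Measure.volume_eq_prod, ← Measure.prod_restrict]
    exact (integrable_uncurry_mul_mul_cos (μ := μ) hv_meas hv_bdd w _).integral_prod_right
  rw [integral_sq_norm_intervalIntegral_mul_exp_eq hv_meas hv_bdd w hT,
    setIntegral_congr_fun (measurableSet_Ioc.prod measurableSet_Ioc) hcov,
    Measure.volume_eq_prod, setIntegral_prod _ hint, intervalIntegral.integral_of_le hT]
  simp only [intervalIntegral.integral_of_le hT]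

end StationaryProcess

theorem stmt_14_general {Ω : Type*} [MeasurableSpace Ω] (μ : Measure Ω) [IsProbabilityMeasure μ]
    (v : ℝ → Ω → ℝ) (hv_meas : Measurable (Function.uncurry v))
    (M : ℝ) (hv_bdd : ∀ t ω, |v t ω| ≤ M)
    (R : ℝ → ℝ) (hR_int : IntegrableOn R (Ici 0))
    (hstat : ∀ s t : ℝ, 0 ≤ s → 0 ≤ t → ∫ ω, v s ω * v t ω ∂μ = R |t - s|)
    (w : ℝ) :
    Tendsto (fun T : ℝ =>
        (1 / T) * ∫ ω, ‖∫ t in (0:ℝ)..T, (v t ω : ℂ) * Complex.exp (-(Complex.I * w * t))‖^2 ∂μ)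
      atTop (nhds (2 * ∫ t in Ici (0:ℝ), R t * Real.cos (w * t))) := by
  set f : ℝ → ℝ := fun t => R t * Real.cos (w * t)
  have hf : IntegrableOn f (Ioi 0) :=
    (hR_int.mono_set Ioi_subset_Ici_self).mul_bdd (c := 1)
      (by fun_prop : Continuous fun t => Real.cos (w * t)).aestronglyMeasurable
      (Eventually.of_forall fun t => Real.abs_cos_le_one _)
  rw [integral_Ici_eq_integral_Ioi, ← integral_comp_abs]
  refine (tendsto_inv_mul_integral_integral_sub (integrable_comp_abs hf)).congr' ?_
  filter_upwards [eventually_ge_atTop 0] with T hT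
  rw [one_div, integral_sq_norm_intervalIntegral_mul_exp_eq_of_stationary hv_meas hv_bdd
    (C := fun u => R |u|) hstat w hT]
  simp only [f, Real.cos_mul_abs]

/-- Power spectral density of a bounded measurable stationary process:
if `E[v_s v_t] = R(|t-s|)` with `R` continuous and integrable on `[0,∞)`, then
`(1/T) E[|∫₀ᵀ v_t e^{-iωt} dt|²] → 2 ∫₀^∞ R(t) cos(ωt) dt` as `T → ∞`. -/
theorem stmt_14 {Ω : Type*} [MeasurableSpace Ω] (μ : Measure Ω) [IsProbabilityMeasure μ]
    (v : ℝ → Ω → ℝ) (hv_meas : Measurable (Function.uncurry v))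
    (M : ℝ) (hv_bdd : ∀ t ω, |v t ω| ≤ M)
    (R : ℝ → ℝ) (hR_cont : Continuous R) (hR_int : IntegrableOn R (Ici 0))
    (hstat : ∀ s t : ℝ, 0 ≤ s → 0 ≤ t → ∫ ω, v s ω * v t ω ∂μ = R |t - s|)
    (w : ℝ) :
    Tendsto (fun T : ℝ =>
        (1 / T) * ∫ ω, ‖∫ t in (0:ℝ)..T, (v t ω : ℂ) * Complex.exp (-(Complex.I * w * t))‖^2 ∂μ)
      atTop (nhds (2 * ∫ t in Ici (0:ℝ), R t * Real.cos (w * t))) :=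
  stmt_14_general μ v hv_meas M hv_bdd R hR_int hstat w
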